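/- arXiv:1809.03198 — 2 statements merged into one kernel-verified Lean document; each statement's English description precedes it below -/
import Mathlib

section
/- Let R be a commutative ring, (x₁, …, x_d) a regular sequence generating an ideal J, E = R^d the free module with basis e₁, …, e_d, and s: E → R the map (y_i e_i) ↦ Σ y_i x_i. Let K_• be the Koszul complex of s with differential d_i(α₁ ∧ ⋯ ∧ α_i) = Σ_t (−1)^{t+1} s(α_t) α₁ ∧ ⋯ ∧ α̂_t ∧ ⋯ ∧ α_i. Then the augmented Koszul complex K_• → R/J is exact, i.e., K_• is a free resolution of R/J. -/
/-!
In the basis `e_S = e_{s₁} ∧ ⋯ ∧ e_{sₙ}` (`s₁ < ⋯ < sₙ`) of `⋀ⁿ Rᵈ` the Koszul differential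
becomes `(∂f)(S) = ∑_{j ∉ S} (-1)^{#{i ∈ S | i < j}} x_j f(S ∪ {j})` on functions `f` of the
`n`-subsets of `{1, …, d}`, and this makes sense with values in any `R`-module `M`. Splitting a
chain over `{1, …, d}` into its values on sets avoiding `d` and on sets containing `d` exhibits the
Koszul complex of `x₁, …, x_d` as the mapping cone of `± x_d` on the Koszul complex of
`x₁, …, x_{d-1}`. By induction on `d`, the smaller complex is exact in positive degrees with
`H₀ = M ⧸ (x₁, …, x_{d-1}) M`, and since `x_d` is a nonzerodivisor on this quotient, every cycle of
the larger complex lifts: first its component containing `d`, then the rest.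
-/

open ExteriorAlgebra

/-- The wedge `v₁ ∧ ⋯ ∧ vₙ` as an element of the `n`-th exterior power
`⋀[R]^n M ⊆ ExteriorAlgebra R M`. -/
noncomputable def wedgeProd (R : Type*) [CommRing R] {M : Type*} [AddCommGroup M]
    [Module R M] {n : ℕ} (v : Fin n → M) : ⋀[R]^n M :=
  ⟨ExteriorAlgebra.ιMulti R n v, ExteriorAlgebra.ιMulti_range R n ⟨v, rfl⟩⟩

open Finset RingTheory.Sequence

instance Set.powersetCard.instUniqueZero {α : Type*} : Unique (Set.powersetCard α 0) where
  default := Set.powersetCard.ofCard (s := ∅) rfl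
  uniq S := Subtype.ext (card_eq_zero.1 S.2)

namespace Fin

variable {m : ℕ}

lemma last_notMem_map_castSuccEmb (U : Finset (Fin m)) : last m ∉ U.map castSuccEmb := by
  simp [castSucc_ne_last]

@[simp]
lemma castSucc_mem_map_castSuccEmb {i : Fin m} {U : Finset (Fin m)} :
    i.castSucc ∈ U.map castSuccEmb ↔ i ∈ U :=
  mem_map' castSuccEmb

lemma insert_castSucc_map_castSuccEmb (i : Fin m) (U : Finset (Fin m)) :
    insert i.castSucc (U.map castSuccEmb) = (insert i U).map castSuccEmb :=
  (map_insert _ _ _).symm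

lemma exists_eq_map_castSuccEmb {S : Finset (Fin (m + 1))} (h : last m ∉ S) :
    ∃ U : Finset (Fin m), S = U.map castSuccEmb := by
  obtain ⟨U, -, hU⟩ := (subset_map_iff (f := castSuccEmb) (t := univ)).1 fun i hi =>
    have ⟨j, hj⟩ := exists_castSucc_eq.2 (ne_of_mem_of_not_mem hi h)
    mem_map.2 ⟨j, mem_univ j, hj⟩
  exact ⟨U, hU⟩

end Fin

lemma Finset.sum_orderEmbOfFin {α β : Type*} [LinearOrder α] [AddCommMonoid β] {k : ℕ}
    (s : Finset α) (h : #s = k) (f : α → β) : ∑ i, f (s.orderEmbOfFin h i) = ∑ a ∈ s, f a := by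
  conv_rhs => rw [← map_orderEmbOfFin_univ s h, sum_map]
  rfl

lemma Finset.orderEmbOfFin_erase {α : Type*} [LinearOrder α] {s : Finset α} {k : ℕ}
    (h : #s = k + 1) (t : Fin (k + 1)) (h' : #(s.erase (s.orderEmbOfFin h t)) = k) :
    ⇑((s.erase (s.orderEmbOfFin h t)).orderEmbOfFin h') = s.orderEmbOfFin h ∘ t.succAbove := by
  refine (orderEmbOfFin_unique h' (fun i => mem_erase.2 ⟨?_, orderEmbOfFin_mem s h _⟩)
    ((s.orderEmbOfFin h).strictMono.comp (Fin.strictMono_succAbove t))).symm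
  exact fun he => Fin.succAbove_ne t i ((s.orderEmbOfFin h).injective he)

lemma List.ofFn_eq_ofFn_init_append {α : Type*} {m : ℕ} (x : Fin (m + 1) → α) :
    List.ofFn x = List.ofFn (Fin.init x) ++ [x (Fin.last m)] := by
  rw [List.ofFn_succ', List.concat_eq_append]
  rfl

section Regular

variable {R M : Type*} [CommRing R] [AddCommGroup M] [Module R M] {m : ℕ}

lemma Ideal.ofList_ofFn (x : Fin m → R) :
    Ideal.ofList (List.ofFn x) = Ideal.span (Set.range x) := by
  unfold Ideal.ofList
  congr 1
  ext
  simp [List.mem_ofFn]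

lemma Ideal.span_range_eq_span_range_init_sup (x : Fin (m + 1) → R) :
    Ideal.span (Set.range x) =
      Ideal.span (Set.range (Fin.init x)) ⊔ Ideal.span {x (Fin.last m)} := by
  rw [← Ideal.ofList_ofFn, List.ofFn_eq_ofFn_init_append, Ideal.ofList_append,
    Ideal.ofList_singleton, Ideal.ofList_ofFn]

lemma RingTheory.Sequence.isWeaklyRegular_ofFn_iff (x : Fin (m + 1) → R) :
    IsWeaklyRegular M (List.ofFn x) ↔ IsWeaklyRegular M (List.ofFn (Fin.init x)) ∧
      IsSMulRegular (M ⧸ (Ideal.span (Set.range (Fin.init x)) • ⊤ : Submodule R M))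
        (x (Fin.last m)) := by
  rw [List.ofFn_eq_ofFn_init_append, isWeaklyRegular_append_iff, isWeaklyRegular_singleton_iff,
    Ideal.ofList_ofFn]

end Regular

namespace KoszulComplex

open Set.powersetCard (ofCard card_eq val_ofCard)

variable {R M : Type*} [CommRing R] [AddCommGroup M] [Module R M] {m n : ℕ}

abbrev Chain (M : Type*) (m n : ℕ) := Set.powersetCard (Fin m) n → M

variable (R) in
/-- The value of a chain at an arbitrary finset, `0` when the cardinality is not `n`; this keeps
cardinality proofs out of the formulas below. -/
def valueAt (S : Finset (Fin m)) : Chain M m n →ₗ[R] M :=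
  if h : #S = n then LinearMap.proj (ofCard h) else 0

lemma valueAt_apply (S : Finset (Fin m)) (f : Chain M m n) :
    valueAt R S f = if h : #S = n then f (ofCard h) else 0 := by
  unfold valueAt
  split_ifs <;> rfl

@[simp]
lemma valueAt_val (S : Set.powersetCard (Fin m) n) (f : Chain M m n) :
    valueAt R S.1 f = f S := by
  rw [valueAt_apply, dif_pos (card_eq S)]
  rfl

def numBelow (S : Finset (Fin m)) (j : Fin m) : ℕ := #{i ∈ S | i < j}

def diff (x : Fin m → R) (n : ℕ) : Chain M m (n + 1) →ₗ[R] Chain M m n :=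
  LinearMap.pi fun S => ∑ j, if j ∈ S.1 then 0 else
    ((-1) ^ numBelow S.1 j * x j) • valueAt R (insert j S.1)

lemma diff_apply (x : Fin m → R) (f : Chain M m (n + 1)) (S : Set.powersetCard (Fin m) n) :
    diff x n f S = ∑ j, if j ∈ S.1 then 0 else
      ((-1) ^ numBelow S.1 j * x j) • valueAt R (insert j S.1) f := by
  simp only [diff, LinearMap.pi_apply, LinearMap.sum_apply]
  congr! 1 with j
  split_ifs <;> rfl

lemma diff_apply_mem_span_smul_top (x : Fin m → R) (f : Chain M m (n + 1))
    (S : Set.powersetCard (Fin m) n) :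
    diff x n f S ∈ Ideal.span (Set.range x) • (⊤ : Submodule R M) := by
  rw [diff_apply]
  refine Submodule.sum_mem _ fun j _ => ?_
  split_ifs
  · exact zero_mem _
  · rw [mul_comm, mul_smul]
    exact Submodule.smul_mem_smul (Ideal.subset_span ⟨j, rfl⟩) Submodule.mem_top

section SplitLast

def insertLast (T : Set.powersetCard (Fin m) n) : Set.powersetCard (Fin (m + 1)) (n + 1) :=
  ofCard (s := insert (Fin.last m) (T.1.map Fin.castSuccEmb))
    (by rw [card_insert_of_notMem (Fin.last_notMem_map_castSuccEmb _), card_map, card_eq T])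

variable (R M) in
def withoutLast (n : ℕ) : Chain M (m + 1) n →ₗ[R] Chain M m n :=
  LinearMap.funLeft R M (Set.powersetCard.map n Fin.castSuccEmb)

variable (R M) in
def withLast (n : ℕ) : Chain M (m + 1) (n + 1) →ₗ[R] Chain M m n :=
  LinearMap.funLeft R M insertLast

lemma valueAt_map_castSuccEmb (U : Finset (Fin m)) (f : Chain M (m + 1) n) :
    valueAt R (U.map Fin.castSuccEmb) f = valueAt R U (withoutLast R M n f) := by
  simp only [valueAt_apply, card_map]
  split_ifs <;> rfl

lemma valueAt_insert_last_map_castSuccEmb (U : Finset (Fin m)) (f : Chain M (m + 1) (n + 1)) :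
    valueAt R (insert (Fin.last m) (U.map Fin.castSuccEmb)) f =
      valueAt R U (withLast R M n f) := by
  simp only [valueAt_apply, card_insert_of_notMem (Fin.last_notMem_map_castSuccEmb U), card_map,
    Nat.add_right_cancel_iff]
  split_ifs <;> rfl

lemma ext_of_withoutLast {f g : Chain M (m + 1) 0}
    (h : withoutLast R M 0 f = withoutLast R M 0 g) : f = g := by
  funext S
  rw [← valueAt_val (R := R) S f, ← valueAt_val (R := R) S g, card_eq_zero.1 (card_eq S),
    ← map_empty Fin.castSuccEmb, valueAt_map_castSuccEmb, valueAt_map_castSuccEmb, h]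

lemma ext_of_withoutLast_of_withLast {f g : Chain M (m + 1) (n + 1)}
    (h₁ : withoutLast R M _ f = withoutLast R M _ g) (h₂ : withLast R M n f = withLast R M n g) :
    f = g := by
  funext S
  rw [← valueAt_val (R := R) S f, ← valueAt_val (R := R) S g]
  by_cases hS : Fin.last m ∈ S.1
  · obtain ⟨U, hU⟩ := Fin.exists_eq_map_castSuccEmb (notMem_erase (Fin.last m) S.1)
    rw [← insert_erase hS, hU, valueAt_insert_last_map_castSuccEmb,
      valueAt_insert_last_map_castSuccEmb, h₂]
  · obtain ⟨U, hU⟩ := Fin.exists_eq_map_castSuccEmb hS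
    rw [hU, valueAt_map_castSuccEmb, valueAt_map_castSuccEmb, h₁]

lemma exists_withoutLast_eq_and_withLast_eq (a : Chain M m (n + 1)) (b : Chain M m n) :
    ∃ f, withoutLast R M _ f = a ∧ withLast R M n f = b := by
  refine ⟨fun S => if Fin.last m ∈ S.1 then
      valueAt R ((S.1.erase (Fin.last m)).preimage Fin.castSuccEmb Fin.castSuccEmb.injective.injOn) b
    else valueAt R (S.1.preimage Fin.castSuccEmb Fin.castSuccEmb.injective.injOn) a,
    funext fun T => ?_, funext fun T => ?_⟩
  · rw [withoutLast, LinearMap.funLeft_apply, Set.powersetCard.val_map,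
      if_neg (Fin.last_notMem_map_castSuccEmb _), preimage_map, valueAt_val]
  · rw [withLast, LinearMap.funLeft_apply, insertLast, val_ofCard, if_pos (mem_insert_self _ _),
      erase_insert (Fin.last_notMem_map_castSuccEmb _), preimage_map, valueAt_val]

lemma numBelow_map_castSuccEmb (U : Finset (Fin m)) (i : Fin m) :
    numBelow (U.map Fin.castSuccEmb) i.castSucc = numBelow U i := by
  simp only [numBelow, filter_map, card_map]
  congr 2 with j

lemma numBelow_map_castSuccEmb_last (U : Finset (Fin m)) :
    numBelow (U.map Fin.castSuccEmb) (Fin.last m) = #U := by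
  rw [numBelow, filter_true_of_mem, card_map]
  simp [Fin.castSucc_lt_last]

lemma numBelow_insert_last (S : Finset (Fin (m + 1))) (i : Fin m) :
    numBelow (insert (Fin.last m) S) i.castSucc = numBelow S i.castSucc := by
  rw [numBelow, filter_insert, if_neg (Fin.castSucc_lt_last i).not_gt, numBelow]

lemma withoutLast_diff (x : Fin (m + 1) → R) (f : Chain M (m + 1) (n + 1)) :
    withoutLast R M n (diff x n f) =
      diff (Fin.init x) n (withoutLast R M (n + 1) f) +
        ((-1) ^ n * x (Fin.last m)) • withLast R M n f := by
  funext T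
  rw [withoutLast, LinearMap.funLeft_apply, diff_apply, Fin.sum_univ_castSucc, Pi.add_apply,
    Pi.smul_apply, diff_apply, ← valueAt_val (R := R) T (withLast R M n f),
    ← valueAt_insert_last_map_castSuccEmb]
  congr 1
  · refine sum_congr rfl fun i _ => ?_
    simp only [Set.powersetCard.val_map, Fin.castSucc_mem_map_castSuccEmb,
      numBelow_map_castSuccEmb, Fin.insert_castSucc_map_castSuccEmb, valueAt_map_castSuccEmb,
      Fin.init]
  · simp [numBelow_map_castSuccEmb_last]

lemma withLast_diff (x : Fin (m + 1) → R) (f : Chain M (m + 1) (n + 2)) :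
    withLast R M n (diff x (n + 1) f) = diff (Fin.init x) n (withLast R M (n + 1) f) := by
  funext T
  rw [withLast, LinearMap.funLeft_apply, diff_apply, Fin.sum_univ_castSucc, diff_apply]
  simp only [insertLast, val_ofCard, mem_insert_self, if_true, add_zero]
  refine sum_congr rfl fun i _ => ?_
  simp only [mem_insert, Fin.castSucc_ne_last, false_or, Fin.castSucc_mem_map_castSuccEmb,
    numBelow_insert_last, numBelow_map_castSuccEmb, insert_comm i.castSucc,
    Fin.insert_castSucc_map_castSuccEmb, valueAt_insert_last_map_castSuccEmb, Fin.init]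

end SplitLast

theorem diff_diff : ∀ {m : ℕ} (x : Fin m → R) (n : ℕ) (f : Chain M m (n + 2)),
    diff x n (diff x (n + 1) f) = 0
  | 0, x, n, f => funext fun S => by simp [diff_apply]
  | m + 1, x, n, f => by
    have hwithout : withoutLast R M n (diff x n (diff x (n + 1) f)) = 0 := by
      rw [withoutLast_diff, withLast_diff, withoutLast_diff, map_add, map_smul, diff_diff,
        zero_add, ← add_smul]
      convert zero_smul R _
      ring
    cases n with
    | zero => exact ext_of_withoutLast (hwithout.trans (map_zero _).symm)
    | succ k =>
      refine ext_of_withoutLast_of_withLast (hwithout.trans (map_zero _).symm) ?_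
      rw [withLast_diff, withLast_diff, diff_diff, map_zero]

/-- Cycles of the complex augmented by `Chain M m 0 → M ⧸ (x) M`. -/
def IsCycle (x : Fin m → R) : (n : ℕ) → Chain M m n → Prop
  | 0, f => f default ∈ Ideal.span (Set.range x) • (⊤ : Submodule R M)
  | n + 1, f => diff x n f = 0

lemma IsCycle.eq_zero_of_fin_zero {x : Fin 0 → R} {f : Chain M 0 n} (hf : IsCycle x n f) :
    f = 0 := by
  cases n with
  | zero =>
    funext S
    change f default ∈ _ at hf
    rw [Subsingleton.elim S default, Pi.zero_apply, ← Submodule.mem_bot R]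
    simpa [Set.range_eq_empty x] using hf
  | succ n => exact funext fun S => absurd (card_le_univ S.1) (by simp [card_eq S])

lemma IsCycle.withLast {x : Fin (m + 1) → R}
    (hreg : IsSMulRegular (M ⧸ (Ideal.span (Set.range (Fin.init x)) • ⊤ : Submodule R M))
      (x (Fin.last m)))
    {f : Chain M (m + 1) (n + 1)} (hf : IsCycle x (n + 1) f) :
    IsCycle (Fin.init x) n (withLast R M n f) := by
  cases n with
  | zero =>
    refine mem_of_isSMulRegular_quotient_of_smul_mem hreg ?_
    have h := congrFun (withoutLast_diff x f) default
    rw [show diff x 0 f = 0 from hf, map_zero, Pi.zero_apply, Pi.add_apply, Pi.smul_apply,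
      pow_zero, one_mul, eq_comm, add_eq_zero_iff_eq_neg'] at h
    rw [h]
    exact neg_mem (diff_apply_mem_span_smul_top _ _ _)
  | succ k =>
    change diff _ k _ = 0
    rw [← withLast_diff, show diff x (k + 1) f = 0 from hf, map_zero]

theorem exists_diff_eq_of_isCycle : ∀ {m : ℕ} {x : Fin m → R},
    IsWeaklyRegular M (List.ofFn x) → ∀ {n : ℕ} {f : Chain M m n}, IsCycle x n f →
      ∃ g, diff x n g = f
  | 0, _, _, _, _, hf => ⟨0, by rw [map_zero, hf.eq_zero_of_fin_zero]⟩
  | m + 1, x, hx, 0, f, hf => by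
    obtain ⟨hx', -⟩ := (isWeaklyRegular_ofFn_iff x).1 hx
    change f default ∈ _ at hf
    rw [Ideal.span_range_eq_span_range_init_sup, Submodule.sup_smul,
      Submodule.ideal_span_singleton_smul] at hf
    obtain ⟨u, hu, v, hv, huv⟩ := Submodule.mem_sup.1 hf
    obtain ⟨c, -, rfl⟩ := (Submodule.mem_smul_pointwise_iff_exists _ _ _).1 hv
    obtain ⟨a, ha⟩ := exists_diff_eq_of_isCycle hx' (n := 0) (f := fun _ => u) hu
    obtain ⟨g, hga, hgc⟩ := exists_withoutLast_eq_and_withLast_eq (R := R) a fun _ => c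
    refine ⟨g, ext_of_withoutLast (R := R) (funext fun S => ?_)⟩
    rw [withoutLast_diff, hga, hgc, ha, withoutLast, LinearMap.funLeft_apply,
      Subsingleton.elim (Set.powersetCard.map 0 _ S) default, ← huv]
    simp
  | m + 1, x, hx, n + 1, f, hf => by
    obtain ⟨hx', hreg⟩ := (isWeaklyRegular_ofFn_iff x).1 hx
    have hf' : diff (Fin.init x) n (withoutLast R M _ f) +
        ((-1) ^ n * x (Fin.last m)) • withLast R M n f = 0 := by
      rw [← withoutLast_diff, show diff x n f = 0 from hf, map_zero]
    obtain ⟨h, hh⟩ := exists_diff_eq_of_isCycle hx' (hf.withLast hreg)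
    obtain ⟨g₁, hg₁⟩ := exists_diff_eq_of_isCycle hx' (n := n + 1)
      (f := withoutLast R M _ f + ((-1) ^ n * x (Fin.last m)) • h)
      (by change diff _ n _ = 0; rwa [map_add, map_smul, hh])
    obtain ⟨g, hg₁', hgh⟩ := exists_withoutLast_eq_and_withLast_eq (R := R) g₁ h
    refine ⟨g, ext_of_withoutLast_of_withLast (R := R) ?_ ?_⟩
    · rw [withoutLast_diff, hg₁', hgh, hg₁, add_assoc, ← add_smul]
      convert add_zero _
      convert zero_smul R h
      ring
    · rw [withLast_diff, hgh, hh]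

def augmentation (x : Fin m → R) :
    Chain M m 0 →ₗ[R] M ⧸ (Ideal.span (Set.range x) • ⊤ : Submodule R M) :=
  (Ideal.span (Set.range x) • ⊤ : Submodule R M).mkQ ∘ₗ LinearMap.proj default

theorem exact_diff_augmentation {x : Fin m → R} (hx : IsWeaklyRegular M (List.ofFn x)) :
    Function.Exact (diff x 0) (augmentation (M := M) x) := fun f => by
  rw [augmentation, LinearMap.comp_apply, Submodule.mkQ_apply, Submodule.Quotient.mk_eq_zero]
  exact ⟨exists_diff_eq_of_isCycle hx (n := 0),
    by rintro ⟨g, rfl⟩; exact diff_apply_mem_span_smul_top x g default⟩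

theorem exact_diff_diff {x : Fin m → R} (hx : IsWeaklyRegular M (List.ofFn x)) (n : ℕ) :
    Function.Exact (diff x (n + 1)) (diff (M := M) x n) := fun f =>
  ⟨exists_diff_eq_of_isCycle (n := n + 1) hx, by rintro ⟨g, rfl⟩; exact diff_diff x n g⟩

section ExteriorPower

variable (R) in
def single (U : Finset (Fin m)) : Chain R m n := fun S => if S.1 = U then 1 else 0

lemma single_val (T : Set.powersetCard (Fin m) n) : single R T.1 = Pi.single T 1 := by
  funext S
  simp [single, Pi.single_apply, Subtype.ext_iff]

lemma valueAt_single {U : Finset (Fin m)} (hU : #U = n) (T : Finset (Fin m)) :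
    valueAt R U (single R (n := n) T) = if U = T then 1 else 0 := by
  rw [valueAt_apply, dif_pos hU]
  rfl

lemma numBelow_erase_self (T : Finset (Fin m)) (j : Fin m) :
    numBelow (T.erase j) j = numBelow T j := by
  rw [numBelow, filter_erase, erase_eq_of_notMem (by simp), numBelow]

lemma numBelow_orderEmbOfFin {k : ℕ} (s : Finset (Fin m)) (h : #s = k) (t : Fin k) :
    numBelow s (s.orderEmbOfFin h t) = t := by
  have := congrArg (fun u => #(u.filter (· < s.orderEmbOfFin h t))) (map_orderEmbOfFin_univ s h)
  simp only [filter_map, card_map, Function.comp_def, RelEmbedding.coe_toEmbedding,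
    OrderEmbedding.lt_iff_lt, filter_gt_eq_Iio, Fin.card_Iio] at this
  exact this.symm

lemma diff_single (x : Fin m → R) (T : Finset (Fin m)) :
    diff x n (single R T) = ∑ j ∈ T, ((-1) ^ numBelow T j * x j) • single R (T.erase j) := by
  funext S
  rw [diff_apply, Finset.sum_apply, ← sum_ite_mem_eq T]
  refine sum_congr rfl fun j _ => ?_
  simp only [Pi.smul_apply, smul_eq_mul, single]
  by_cases hjS : j ∈ S.1
  · have : S.1 ≠ T.erase j := fun h => notMem_erase j T (h ▸ hjS)
    simp [hjS, this]
  rw [if_neg hjS, valueAt_single (by rw [card_insert_of_notMem hjS, card_eq S])]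
  by_cases hjT : j ∈ T
  · by_cases h : S.1 = T.erase j
    · simp [h, hjT, numBelow_erase_self]
    · have : insert j S.1 ≠ T := by
        rwa [ne_eq, eq_comm, ← erase_eq_iff_eq_insert hjT hjS, eq_comm]
      simp [h, hjT, this]
  · have : insert j S.1 ≠ T := fun h => hjT (h ▸ mem_insert_self j S.1)
    simp [hjT, this]

variable (R) in
noncomputable def toExteriorPower (d n : ℕ) : Chain R d n ≃ₗ[R] ⋀[R]^n (Fin d → R) :=
  ((Pi.basisFun R (Fin d)).exteriorPower n).equivFun.symm

lemma toExteriorPower_single {d : ℕ} {U : Finset (Fin d)} (hU : #U = n) :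
    toExteriorPower R d n (single R U) =
      wedgeProd R fun i => Pi.single (U.orderEmbOfFin hU i) 1 := by
  rw [toExteriorPower, show single R U = Pi.single (ofCard hU) 1 from single_val (ofCard hU),
    Basis.equivFun_symm_single, exteriorPower.basis_apply]
  simp only [exteriorPower.ιMulti_family, Function.comp_def, Pi.basisFun_apply]
  rfl

theorem comp_toExteriorPower {d : ℕ} (x : Fin d → R)
    (δ : ⋀[R]^(n + 1) (Fin d → R) →ₗ[R] ⋀[R]^n (Fin d → R))
    (hδ : ∀ v : Fin (n + 1) → Fin d → R, δ (wedgeProd R v) = ∑ t : Fin (n + 1),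
      ((-1 : R) ^ (t : ℕ) * ∑ j, v t j * x j) • wedgeProd R fun j : Fin n => v (t.succAbove j)) :
    δ ∘ₗ (toExteriorPower R d (n + 1)).toLinearMap =
      (toExteriorPower R d n).toLinearMap ∘ₗ diff x n := by
  refine (Pi.basisFun R _).ext fun T => ?_
  rw [Pi.basisFun_apply, ← single_val, LinearMap.comp_apply, LinearMap.comp_apply,
    LinearEquiv.coe_coe, LinearEquiv.coe_coe, toExteriorPower_single (card_eq T), hδ, diff_single,
    map_sum, ← sum_orderEmbOfFin T.1 (card_eq T)]
  refine sum_congr rfl fun t _ => ?_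
  have hcard : #(T.1.erase (T.1.orderEmbOfFin (card_eq T) t)) = n := by
    rw [card_erase_of_mem (orderEmbOfFin_mem _ _ _), card_eq T, Nat.add_sub_cancel]
  rw [map_smul, toExteriorPower_single hcard, orderEmbOfFin_erase, numBelow_orderEmbOfFin]
  simp [Pi.single_apply]

theorem comp_toExteriorPower_zero {d : ℕ} (x : Fin d → R)
    (ε : ⋀[R]^0 (Fin d → R) →ₗ[R] R ⧸ Ideal.span (Set.range x))
    (hε : ε (wedgeProd R fun i : Fin 0 => i.elim0) = 1) :
    ε ∘ₗ (toExteriorPower R d 0).toLinearMap =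
      (Submodule.quotEquivOfEq _ _ (by rw [smul_eq_mul, Ideal.mul_top])).toLinearMap ∘ₗ
        augmentation x := by
  refine (Pi.basisFun R _).ext fun T => ?_
  rw [Pi.basisFun_apply, ← single_val, LinearMap.comp_apply, LinearMap.comp_apply,
    LinearEquiv.coe_coe, LinearEquiv.coe_coe, toExteriorPower_single (card_eq T), augmentation,
    LinearMap.comp_apply, LinearMap.proj_apply, Submodule.mkQ_apply, Submodule.quotEquivOfEq_mk,
    single, if_pos (congrArg Subtype.val (Subsingleton.elim _ _))]
  convert hε using 3
  rfl

end ExteriorPower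

end KoszulComplex

/-- Let `R` be a commutative ring, `(x₁, …, x_d)` a regular sequence
generating the ideal `J`, `E = R^d` free with basis `e₁, …, e_d`, and
`s : E → R`, `(yᵢ eᵢ) ↦ Σ yᵢ xᵢ`.  Let `K_•` be the Koszul complex, with `K_i = Λ^i E`
and differential `δᵢ(α₁ ∧ ⋯ ∧ α_{i+1}) = Σ_t (−1)^t s(α_t) α₁ ∧ ⋯ ∧ α̂_t ∧ ⋯`, and
`ε : K_0 = Λ^0 E → R/J` the augmentation (`ε(1) = 1`).  Then the augmented Koszul
complex `K_• → R/J` is exact: `ε` is surjective, the complex is exact at `K_0`, and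
it is exact at `K_i` for every `i ≥ 1`; i.e. `K_•` is a free resolution of `R/J`. -/
theorem koszul_complex_is_resolution
    (R : Type*) [CommRing R] (d : ℕ) (x : Fin d → R)
    (hreg : RingTheory.Sequence.IsRegular R (List.ofFn x))
    (J : Ideal R) (hJ : J = Ideal.span (Set.range x))
    (δ : ∀ i : ℕ, (⋀[R]^(i+1) (Fin d → R)) →ₗ[R] ⋀[R]^i (Fin d → R))
    (hδ : ∀ (i : ℕ) (v : Fin (i+1) → (Fin d → R)),
      δ i (wedgeProd R v) = ∑ t : Fin (i+1),
        ((-1 : R) ^ (t : ℕ) * ∑ j, v t j * x j) •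
          wedgeProd R (fun j : Fin i => v (t.succAbove j)))
    (ε : (⋀[R]^0 (Fin d → R)) →ₗ[R] R ⧸ J)
    (hε : ε (wedgeProd R (fun i : Fin 0 => i.elim0)) = 1) :
    Function.Surjective ε ∧ Function.Exact (δ 0) ε ∧
      ∀ i : ℕ, Function.Exact (δ (i+1)) (δ i) := by
  subst hJ
  have hx := hreg.toIsWeaklyRegular
  refine ⟨fun y => ?_, ?_, fun i => ?_⟩
  · obtain ⟨r, rfl⟩ := Ideal.Quotient.mk_surjective y
    exact ⟨r • wedgeProd R fun i => i.elim0, by rw [map_smul, hε, Algebra.smul_def, mul_one]; rfl⟩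
  · exact (Function.Exact.iff_of_ladder_linearEquiv
      (KoszulComplex.comp_toExteriorPower x (δ 0) (hδ 0))
      (KoszulComplex.comp_toExteriorPower_zero x ε hε)).2
      (KoszulComplex.exact_diff_augmentation hx)
  · exact (Function.Exact.iff_of_ladder_linearEquiv
      (KoszulComplex.comp_toExteriorPower x _ (hδ (i + 1)))
      (KoszulComplex.comp_toExteriorPower x _ (hδ i))).2
      (KoszulComplex.exact_diff_diff hx i)
end

section
/- Let R be a commutative Noetherian ring, J = (x₁, …, x_d) an ideal generated by a regular sequence, and L an R-module. Then Ext^d_R(R/J, L) is isomorphic as an R/J-module to Hom_{R/J}(Λ^d(J/J²), L/JL), via the map induced on the top cohomology of the dual Koszul complex sending f ∈ Hom_R(Λ^d E, L) to the map x̄₁ ∧ ⋯ ∧ x̄_d ↦ f(x₁ ∧ ⋯ ∧ x_d) mod JL. -/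
/-!
`Λ^d E` is free of rank one on `ω = e₁ ∧ ⋯ ∧ e_d`, so a map `f` out of it is determined by
`f ω ∈ L`, and every value occurs. The Koszul differential gives `δ ω = Σₜ ± xₜ ωₜ`, where the
`ωₜ = e₁ ∧ ⋯ ∧ êₜ ∧ ⋯ ∧ e_d` are distinct members of the standard basis of `Λ^(d-1) E`; so the
values `g (δ ω) = Σₜ ± xₜ g ωₜ`, for `g` ranging over maps on `Λ^(d-1) E`, are exactly the elements
of `J L`.
-/

open ExteriorAlgebra

theorem wedgeProd_eq_ιMulti {R M : Type*} [CommRing R] [AddCommGroup M] [Module R M] {n : ℕ}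
    (v : Fin n → M) : wedgeProd R v = exteriorPower.ιMulti R n v := rfl

theorem Submodule.mem_ideal_span_range_smul_top_iff {R M ι : Type*} [CommSemiring R]
    [AddCommMonoid M] [Module R M] [Fintype ι] (x : ι → R) (m : M) :
    m ∈ Ideal.span (Set.range x) • (⊤ : Submodule R M) ↔ ∃ l : ι → M, ∑ i, x i • l i = m := by
  refine ⟨fun hm => ?_, ?_⟩
  · refine Submodule.smul_induction_on (p := fun m => ∃ l : ι → M, ∑ i, x i • l i = m) hm ?_ ?_
    · intro r hr m _
      obtain ⟨c, rfl⟩ := (Submodule.mem_span_range_iff_exists_fun R).mp hr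
      exact ⟨fun i => c i • m, by simp only [smul_smul, ← Finset.sum_smul, smul_eq_mul, mul_comm]⟩
    · rintro - - ⟨l₁, rfl⟩ ⟨l₂, rfl⟩
      exact ⟨l₁ + l₂, by simp only [Pi.add_apply, smul_add, Finset.sum_add_distrib]⟩
  · rintro ⟨l, rfl⟩
    exact Submodule.sum_mem _ fun i _ =>
      Submodule.smul_mem_smul (Ideal.subset_span ⟨i, rfl⟩) Submodule.mem_top

theorem LinearMap.exists_apply_eq_of_biorthogonal {R P N ι : Type*} [CommSemiring R]
    [AddCommMonoid P] [Module R P] [AddCommMonoid N] [Module R N] [Fintype ι] [DecidableEq ι]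
    (w : ι → P) (φ : ι → Module.Dual R P) (hφ : ∀ s t, φ s (w t) = if s = t then 1 else 0)
    (l : ι → N) : ∃ g : P →ₗ[R] N, ∀ t, g (w t) = l t :=
  ⟨∑ s, (φ s).smulRight (l s), fun t => by simp [hφ]⟩

namespace exteriorPower

variable {R M N : Type*} [CommRing R] [AddCommGroup M] [Module R M] [AddCommGroup N] [Module R N]
  {n : ℕ}

theorem linearMap_ext_top (b : Module.Basis (Fin n) R M) {f g : ⋀[R]^n M →ₗ[R] N}
    (h : f (ιMulti R n b) = g (ιMulti R n b)) : f = g := by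
  refine linearMap_ext (b.ext_alternating fun i hi => ?_)
  let σ := Equiv.ofBijective i (Finite.injective_iff_bijective.1 hi)
  change f (ιMulti R n (b ∘ σ)) = g (ιMulti R n (b ∘ σ))
  simp [AlternatingMap.map_perm, h]

theorem exists_apply_ιMulti_top (b : Module.Basis (Fin n) R M) (l : N) :
    ∃ f : ⋀[R]^n M →ₗ[R] N, f (ιMulti R n b) = l := by
  refine ⟨(pairingDual R M n (ιMulti R n b.coord)).smulRight l, ?_⟩
  have h : pairingDual R M n (ιMulti R n b.coord) (ιMulti R n b) = 1 :=
    pairingDual_apply_apply_eq_one b b.coord (by simp) (fun i j h => by simp [h]) n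
      (OrderIso.refl (Fin n)).toOrderEmbedding
  rw [LinearMap.smulRight_apply, h, one_smul]

theorem pairingDual_coord_succAbove (b : Module.Basis (Fin (n + 1)) R M) (s t : Fin (n + 1)) :
    pairingDual R M n (ιMulti R n (b.coord ∘ s.succAboveOrderEmb))
      (ιMulti R n (b ∘ t.succAboveOrderEmb)) = if s = t then 1 else 0 := by
  have h₀ : ∀ ⦃i j⦄, i ≠ j → b.coord i (b j) = 0 := fun i j h => by simp [h]
  split_ifs with hst
  · subst hst
    exact pairingDual_apply_apply_eq_one b b.coord (by simp) h₀ n _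
  · exact pairingDual_apply_apply_eq_one_zero b b.coord h₀ n _ _
      (fun h => hst (Fin.succAbove_left_injective (congrArg DFunLike.coe h)))

theorem exists_apply_ιMulti_succAbove (b : Module.Basis (Fin (n + 1)) R M)
    (l : Fin (n + 1) → N) :
    ∃ g : ⋀[R]^n M →ₗ[R] N, ∀ t, g (ιMulti R n (b ∘ t.succAbove)) = l t :=
  LinearMap.exists_apply_eq_of_biorthogonal _ _ (pairingDual_coord_succAbove b) l

end exteriorPower

/-- `Ext^d_R(R/J, L)` is the top cohomology of `Hom_R(Λ^• E, L)`, and evaluation at the generator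
`x̄₁ ∧ ⋯ ∧ x̄_d` identifies `Hom_{R/J}(Λ^d(J/J²), L/JL)` with `L/JL`; the isomorphism is thus
stated as: `f ↦ f(e₁ ∧ ⋯ ∧ e_d) mod JL` is onto `L/JL`, with kernel the image of `g ↦ g ∘ δ`. -/
theorem fundamental_local_isomorphism_general
    (R : Type*) [CommRing R] (e : ℕ) (x : Fin (e+1) → R)
    (J : Ideal R) (hJ : J = Ideal.span (Set.range x))
    (L : Type*) [AddCommGroup L] [Module R L]
    (δ : (⋀[R]^(e+1) (Fin (e+1) → R)) →ₗ[R] ⋀[R]^e (Fin (e+1) → R))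
    (hδ : ∀ v : Fin (e+1) → (Fin (e+1) → R),
      δ (wedgeProd R v) = ∑ t : Fin (e+1),
        ((-1 : R) ^ (t : ℕ) * ∑ j, v t j * x j) •
          wedgeProd R (fun j : Fin e => v (t.succAbove j))) :
    Function.Surjective
      (fun f : (⋀[R]^(e+1) (Fin (e+1) → R)) →ₗ[R] L =>
        (Submodule.Quotient.mk (p := J • (⊤ : Submodule R L))
          (f (wedgeProd R (fun i => Pi.single i (1 : R)))))) ∧
    ∀ f : (⋀[R]^(e+1) (Fin (e+1) → R)) →ₗ[R] L,
      (Submodule.Quotient.mk (p := J • (⊤ : Submodule R L))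
          (f (wedgeProd R (fun i => Pi.single i (1 : R)))) = 0
        ↔ ∃ g : (⋀[R]^e (Fin (e+1) → R)) →ₗ[R] L, f = g.comp δ) := by
  let b := Pi.basisFun R (Fin (e + 1))
  have hb : ⇑b = fun i => Pi.single i (1 : R) := funext (Pi.basisFun_apply R _)
  have hδω : δ (exteriorPower.ιMulti R (e + 1) b) = ∑ t : Fin (e + 1),
      ((-1 : R) ^ (t : ℕ) * x t) • exteriorPower.ιMulti R e (b ∘ t.succAbove) := by
    simpa [hb, wedgeProd_eq_ιMulti, Pi.single_apply, Function.comp_def] using hδ b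
  simp only [wedgeProd_eq_ιMulti, ← hb, Submodule.Quotient.mk_eq_zero, hJ,
    Submodule.mem_ideal_span_range_smul_top_iff]
  refine ⟨fun q => ?_, fun f => ⟨fun ⟨l, hl⟩ => ?_, ?_⟩⟩
  · obtain ⟨l, rfl⟩ := Submodule.Quotient.mk_surjective _ q
    obtain ⟨f, hf⟩ := exteriorPower.exists_apply_ιMulti_top b l
    exact ⟨f, congrArg _ hf⟩
  · obtain ⟨g, hg⟩ :=
      exteriorPower.exists_apply_ιMulti_succAbove b fun t => (-1 : R) ^ (t : ℕ) • l t
    have hsign : ∀ (k : ℕ) (a : R), (-1 : R) ^ k * a * (-1) ^ k = a := fun k a => by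
      rw [mul_right_comm, ← pow_add, Even.neg_one_pow ⟨k, rfl⟩, one_mul]
    refine ⟨g, exteriorPower.linearMap_ext_top b ?_⟩
    simp [hδω, hg, ← hl, smul_smul, hsign]
  · rintro ⟨g, rfl⟩
    exact ⟨fun t => (-1 : R) ^ (t : ℕ) • g (exteriorPower.ιMulti R e (b ∘ t.succAbove)),
      by simp [hδω, smul_smul, mul_comm]⟩

/-- fundamental local isomorphism: Let `R` be a commutative Noetherian
ring, `J = (x₁, …, x_d)` generated by a regular sequence (`d = e + 1`), `E = R^d`
free with the Koszul resolution `P_• = Λ^• E` of `R/J`, and `L` an `R`-module.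
Since `Λ^d (J/J²)` is free of rank one over `R/J` on `x̄₁ ∧ ⋯ ∧ x̄_d`, evaluation at
this basis vector identifies `Hom_{R/J}(Λ^d(J/J²), L/JL)` with `L/JL`.  The claim
`Ext^d_R(R/J, L) ≅ Hom_{R/J}(Λ^d(J/J²), L/JL)` via the map induced on the top
cohomology of the dual Koszul complex, sending `f ∈ Hom_R(Λ^d E, L)` to
`x̄₁ ∧ ⋯ ∧ x̄_d ↦ f(x₁ ∧ ⋯ ∧ x_d) mod JL`, then reads: the map
`Φ : Hom_R(Λ^d E, L) → L/JL`, `f ↦ f(e₁ ∧ ⋯ ∧ e_d) mod JL`, is surjective with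
kernel exactly the image of the top Koszul codifferential `g ↦ g ∘ δ`. -/
theorem fundamental_local_isomorphism
    (R : Type*) [CommRing R] [IsNoetherianRing R] (e : ℕ) (x : Fin (e+1) → R)
    (hreg : RingTheory.Sequence.IsRegular R (List.ofFn x))
    (J : Ideal R) (hJ : J = Ideal.span (Set.range x))
    (L : Type*) [AddCommGroup L] [Module R L]
    (δ : (⋀[R]^(e+1) (Fin (e+1) → R)) →ₗ[R] ⋀[R]^e (Fin (e+1) → R))
    (hδ : ∀ v : Fin (e+1) → (Fin (e+1) → R),
      δ (wedgeProd R v) = ∑ t : Fin (e+1),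
        ((-1 : R) ^ (t : ℕ) * ∑ j, v t j * x j) •
          wedgeProd R (fun j : Fin e => v (t.succAbove j))) :
    Function.Surjective
      (fun f : (⋀[R]^(e+1) (Fin (e+1) → R)) →ₗ[R] L =>
        (Submodule.Quotient.mk (p := J • (⊤ : Submodule R L))
          (f (wedgeProd R (fun i => Pi.single i (1 : R)))))) ∧
    ∀ f : (⋀[R]^(e+1) (Fin (e+1) → R)) →ₗ[R] L,
      (Submodule.Quotient.mk (p := J • (⊤ : Submodule R L))
          (f (wedgeProd R (fun i => Pi.single i (1 : R)))) = 0
        ↔ ∃ g : (⋀[R]^e (Fin (e+1) → R)) →ₗ[R] L, f = g.comp δ) :=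
  fundamental_local_isomorphism_general R e x J hJ L δ hδ
end
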